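/- arXiv:1204.2440 — 3 statements merged into one kernel-verified Lean document; each statement's English description precedes it below -/
import Mathlib

section
/- The equation 9t^4 + v^4 + 10v^2w^2 + w^4 - 10t^2v^2 - 10t^2w^2 = 0 has a solution with t, v, w all nonzero real numbers and v^2 ≠ w^2; in particular there exist non-naturally-reductive metrics (t^2, v^2, w^2 not all equal) satisfying the first Ledger condition. -/
/-! Viewed as a quadratic in `t²`, the left-hand side has discriminant proportional to
`(2v² - w²)(v² - 2w²)`, so on the locus `v² = 2w²` it is the perfect square `(3t² - 5w²)²`.
Hence `t² = 5`, `v² = 6`, `w² = 3` is a solution. -/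

theorem ledger_poly_eq_sq_of_sq_eq_two_mul_sq {R : Type*} [CommRing R] {t v w : R}
    (h : v^2 = 2*w^2) :
    9*t^4 + v^4 + 10*v^2*w^2 + w^4 - 10*t^2*v^2 - 10*t^2*w^2 = (3*t^2 - 5*w^2)^2 := by
  linear_combination (v^2 + 12*w^2 - 10*t^2) * h

theorem stmt5 :
    ∃ t v w : ℝ, t ≠ 0 ∧ v ≠ 0 ∧ w ≠ 0 ∧ v^2 ≠ w^2 ∧
      9*t^4 + v^4 + 10*v^2*w^2 + w^4 - 10*t^2*v^2 - 10*t^2*w^2 = 0 := by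
  have ht : √5 ^ 2 = 5 := Real.sq_sqrt (by norm_num)
  have hv : √6 ^ 2 = 6 := Real.sq_sqrt (by norm_num)
  have hw : √3 ^ 2 = 3 := Real.sq_sqrt (by norm_num)
  refine ⟨√5, √6, √3, by positivity, by positivity, by positivity, ?_, ?_⟩
  · rw [hv, hw]
    norm_num
  · rw [ledger_poly_eq_sq_of_sq_eq_two_mul_sq (by rw [hv, hw]; norm_num), ht, hw]
    norm_num
end

section
/- For every S in the open interval (1/3, (7-sqrt 17)/2), the quantities P = -S(S-4)(3S-1)/(8(8-3S)), D = S(-3S^2+3S+4)/(2(8-3S)) and Q = 4(8-7S+S^2)/(8-3S) satisfy P > 0, D > 0, 0 < Q < 16. -/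
theorem stmt15 (S P D Q : ℝ)
    (h1 : 1/3 < S) (h2 : S < (7 - Real.sqrt 17)/2)
    (hP : P = -S*(S-4)*(3*S-1)/(8*(8-3*S)))
    (hD : D = S*(-3*S^2 + 3*S + 4)/(2*(8-3*S)))
    (hQ : Q = 4*(8 - 7*S + S^2)/(8 - 3*S)) :
    0 < P ∧ 0 < D ∧ 0 < Q ∧ Q < 16 := by
  have ht2 : Real.sqrt 17 ^ 2 = 17 := Real.sq_sqrt (by norm_num)
  have ht4 : (4:ℝ) < Real.sqrt 17 := by
    nlinarith [Real.sqrt_nonneg 17, ht2]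
  have ht5 : Real.sqrt 17 < 5 := by
    nlinarith [Real.sqrt_nonneg 17, ht2]
  have hS32 : S < 3/2 := by linarith
  have hden : (0:ℝ) < 8 - 3*S := by linarith
  have hQnum : 0 < 8 - 7*S + S^2 := by
    nlinarith [sq_nonneg (2*S - 7 + Real.sqrt 17), ht2]
  have hS0 : (0:ℝ) < S := by linarith
  have h4S : (0:ℝ) < 4 - S := by linarith
  have h3S1 : (0:ℝ) < 3*S - 1 := by linarith
  refine ⟨?_, ?_, ?_, ?_⟩
  · rw [hP]
    apply div_pos
    · nlinarith [mul_pos (mul_pos hS0 h4S) h3S1]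
    · linarith
  · rw [hD]
    apply div_pos
    · nlinarith
    · linarith
  · rw [hQ]
    apply div_pos <;> nlinarith
  · rw [hQ, div_lt_iff₀ hden]
    nlinarith
end

section
/- Let t, v, w be nonzero reals and u ∈ (-4t^2, 4t^2). The condition U(X,Y) = 0 for all X, Y (i.e. all coefficients (t^2-v^2)/(2tvw), u/(4vwt), (K^2-v^2)/(2Kvw), (K^2-w^2)/(2Kvw), (t^2-w^2)/(2tvw), (v^2-w^2)/(2vwt), (v^2-w^2)/(2vwK), uv/(4t^2wK), uw/(4t^2vK) vanish, with K^2 = t^2 - u^2/(4t^2)) holds if and only if u = 0 and t^2 = v^2 = w^2. -/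
theorem stmt19 (t u v w K : ℝ)
    (ht : t ≠ 0) (hv : v ≠ 0) (hw : w ≠ 0)
    (hu1 : -4*t^2 < u) (hu2 : u < 4*t^2)
    (hK : K = Real.sqrt (t^2 - u^2/(4*t^2))) :
    ((t^2 - v^2)/(2*t*v*w) = 0 ∧
     u/(4*v*w*t) = 0 ∧
     (K^2 - v^2)/(2*K*v*w) = 0 ∧
     (K^2 - w^2)/(2*K*v*w) = 0 ∧
     (t^2 - w^2)/(2*t*v*w) = 0 ∧
     (v^2 - w^2)/(2*v*w*t) = 0 ∧
     (v^2 - w^2)/(2*v*w*K) = 0 ∧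
     u*v/(4*t^2*w*K) = 0 ∧
     u*w/(4*t^2*v*K) = 0) ↔
    (u = 0 ∧ t^2 = v^2 ∧ v^2 = w^2) := by
  constructor
  · rintro ⟨h1, h2, -, -, h5, -, -, -, -⟩
    have d1 : (2*t*v*w) ≠ 0 := by positivity
    have d2 : (4*v*w*t) ≠ 0 := by positivity
    have e1 : t^2 - v^2 = 0 := by
      rcases (div_eq_zero_iff.mp h1) with h | h
      · exact h
      · exact absurd h d1
    have e2 : u = 0 := by
      rcases (div_eq_zero_iff.mp h2) with h | h
      · exact h
      · exact absurd h d2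
    have e5 : t^2 - w^2 = 0 := by
      rcases (div_eq_zero_iff.mp h5) with h | h
      · exact h
      · exact absurd h d1
    refine ⟨e2, by linarith, by linarith⟩
  · rintro ⟨hu, htv, hvw⟩
    have hK2 : K^2 = t^2 := by
      rw [hK, Real.sq_sqrt]
      · rw [hu]; ring
      · rw [hu]; norm_num; positivity
    refine ⟨?_, ?_, ?_, ?_, ?_, ?_, ?_, ?_, ?_⟩ <;>
      simp [hu, hK2, htv, hvw, sub_eq_zero.mpr, show t^2 - v^2 = 0 by linarith,
        show K^2 - v^2 = 0 by linarith, show K^2 - w^2 = 0 by linarith,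
        show t^2 - w^2 = 0 by linarith, show v^2 - w^2 = 0 by linarith]
end
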